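/- arXiv:2306.10981 — 2 statements merged into one kernel-verified Lean document; each statement's English description precedes it below -/
import Mathlib

section
/- Let G be a group and let x, y ∈ G be commuting elements of finite orders h1 and h2 respectively, and let Ω = |⟨x⟩ ∩ ⟨y⟩|, s = h1/Ω, t = h2/Ω. Then the set ⟨x, y⟩ \ (⟨x⟩ ∪ ⟨y⟩) has exactly (s−1)·(t−1)·Ω elements. -/
/-!
Since `x` and `y` commute, `⟨x⟩` normalizes `⟨y⟩`, so Noether's second isomorphism theorem gives
the product formula `|⟨x, y⟩| · |⟨x⟩ ∩ ⟨y⟩| = h1 · h2`, i.e. `|⟨x, y⟩| = s t Ω`. Removing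
`⟨x⟩ ∪ ⟨y⟩`, which has `sΩ + tΩ - Ω` elements by inclusion–exclusion, leaves
`stΩ - sΩ - tΩ + Ω = (s - 1)(t - 1)Ω` elements.
-/

namespace Subgroup

variable {G : Type*} [Group G] {H K : Subgroup G}

theorem relIndex_sup_right_of_le_normalizer (hHK : H ≤ normalizer (K : Set G)) :
    K.relIndex (H ⊔ K) = K.relIndex H :=
  letI := normal_subgroupOf_of_le_normalizer hHK
  letI := normal_subgroupOf_sup_of_le_normalizer hHK
  Nat.card_congr (QuotientGroup.quotientInfEquivProdNormalizerQuotient H K hHK).toEquiv.symm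

theorem card_sup_mul_card_inf_of_le_normalizer (hHK : H ≤ normalizer (K : Set G)) :
    Nat.card ↥(H ⊔ K) * Nat.card ↥(H ⊓ K) = Nat.card H * Nat.card K := by
  have hsup : Nat.card K * K.relIndex (H ⊔ K) = Nat.card ↥(H ⊔ K) := by
    simpa [relIndex_bot_left] using relIndex_mul_relIndex ⊥ K (H ⊔ K) bot_le le_sup_right
  have hH : Nat.card ↥(H ⊓ K) * K.relIndex H = Nat.card H := by
    simpa [relIndex_bot_left, inf_relIndex_left] using
      relIndex_mul_relIndex ⊥ (H ⊓ K) H bot_le inf_le_left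
  rw [← hsup, ← hH, relIndex_sup_right_of_le_normalizer hHK]
  ring

theorem card_sup_sdiff_union_add_card_add_card (H K : Subgroup G) [Finite ↥(H ⊔ K)] :
    Nat.card ↥((H ⊔ K : Subgroup G) \ ((H : Set G) ∪ K) : Set G) + Nat.card H + Nat.card K =
      Nat.card ↥(H ⊔ K) + Nat.card ↥(H ⊓ K) := by
  have hunion : (H : Set G) ∪ K ⊆ (H ⊔ K : Subgroup G) :=
    Set.union_subset (SetLike.coe_subset_coe.mpr le_sup_left)
      (SetLike.coe_subset_coe.mpr le_sup_right)
  have hH : (H : Set G).Finite := (Set.toFinite _).subset (Set.subset_union_left.trans hunion)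
  have hK : (K : Set G).Finite := (Set.toFinite _).subset (Set.subset_union_right.trans hunion)
  have hsdiff := Set.ncard_sdiff_add_ncard_of_subset hunion
  have hinc := Set.ncard_union_add_ncard_inter _ _ hH hK
  rw [← coe_inf] at hinc
  simp only [← Nat.card_coe_set_eq, SetLike.coe_sort_coe] at hsdiff hinc ⊢
  omega

end Subgroup

theorem Commute.zpowers_le_normalizer_zpowers {G : Type*} [Group G] {x y : G} (h : Commute x y) :
    Subgroup.zpowers x ≤ Subgroup.normalizer (Subgroup.zpowers y : Set G) :=
  (Subgroup.zpowers_le.mpr (Subgroup.mem_centralizer_iff.mpr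
    (by rintro _ ⟨n, rfl⟩; exact (h.symm.zpow_left n).eq))).trans
    (Subgroup.centralizer_le_normalizer _)

/-- Let `x, y` be commuting elements of a group `G` of finite orders `h1` and `h2`, and
let `Ω = |⟨x⟩ ∩ ⟨y⟩|`, `s = h1/Ω`, `t = h2/Ω`. Then the set `⟨x, y⟩ \ (⟨x⟩ ∪ ⟨y⟩)` has
exactly `(s−1)·(t−1)·Ω` elements. -/
theorem card_closure_sdiff_union (G : Type*) [Group G] (x y : G) (hxy : Commute x y)
    (h1 h2 Ω s t : ℕ)
    (hx : orderOf x = h1) (hy : orderOf y = h2) (hx0 : 0 < h1) (hy0 : 0 < h2)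
    (hΩ : Ω = Nat.card ↥(Subgroup.zpowers x ⊓ Subgroup.zpowers y))
    (hs : s = h1 / Ω) (ht : t = h2 / Ω) :
    Nat.card ↥((Subgroup.closure ({x, y} : Set G) : Set G) \
        ((Subgroup.zpowers x : Set G) ∪ (Subgroup.zpowers y : Set G))) =
      (s - 1) * (t - 1) * Ω := by
  have hclosure : Subgroup.closure ({x, y} : Set G) = Subgroup.zpowers x ⊔ Subgroup.zpowers y := by
    rw [Set.insert_eq, Subgroup.closure_union, Subgroup.zpowers_eq_closure,
      Subgroup.zpowers_eq_closure]
  have hprod := Subgroup.card_sup_mul_card_inf_of_le_normalizer hxy.zpowers_le_normalizer_zpowers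
  rw [Nat.card_zpowers, Nat.card_zpowers, hx, hy, ← hΩ] at hprod
  have hΩx : Ω ∣ h1 := hΩ ▸ hx ▸ Nat.card_zpowers x ▸ Subgroup.card_dvd_of_le inf_le_left
  have hΩy : Ω ∣ h2 := hΩ ▸ hy ▸ Nat.card_zpowers y ▸ Subgroup.card_dvd_of_le inf_le_right
  have : Finite ↥(Subgroup.zpowers x ⊔ Subgroup.zpowers y) :=
    Nat.finite_of_card_ne_zero (left_ne_zero_of_mul (hprod ▸ (Nat.mul_pos hx0 hy0).ne'))
  have hcount := Subgroup.card_sup_sdiff_union_add_card_add_card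
    (Subgroup.zpowers x) (Subgroup.zpowers y)
  rw [Nat.card_zpowers, Nat.card_zpowers, hx, hy, ← hΩ] at hcount
  rw [hclosure]
  obtain ⟨s', rfl⟩ := hΩx
  obtain ⟨t', rfl⟩ := hΩy
  have hΩ0 : 0 < Ω := Nat.pos_of_mul_pos_right hx0
  rw [Nat.mul_div_cancel_left _ hΩ0] at hs ht
  subst hs ht
  have hs1 : 1 ≤ s := Nat.pos_of_mul_pos_left hx0
  have ht1 : 1 ≤ t := Nat.pos_of_mul_pos_left hy0
  have hN : Nat.card ↥(Subgroup.zpowers x ⊔ Subgroup.zpowers y) = s * t * Ω :=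
    Nat.eq_of_mul_eq_mul_right hΩ0 (by rw [hprod]; ring)
  zify [hs1, ht1] at hcount hN ⊢
  linear_combination hcount + hN
end

section
/- Let A be an abelian group and let x, y ∈ A be elements of finite orders h1 and h2 respectively. Let Ω = |⟨x⟩ ∩ ⟨y⟩|, s = h1/Ω and t = h2/Ω. Then there exists an integer c coprime to Ω with x^s = y^{c·t}, and for any such c the group homomorphism Φ : ℤ/h1ℤ × ℤ/h2ℤ → A given by (a, b) ↦ x^a·y^b is well defined, has image ⟨x, y⟩, and its kernel is the cyclic subgroup generated by the class of (s, −c·t), which has order Ω. -/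
/-!
A subgroup of order `d` of the cyclic group `⟨x⟩` of order `h` is `⟨x ^ (h / d)⟩`, since each of
its elements `x ^ k` satisfies `x ^ (k d) = 1`, so `h / d ∣ k`. Hence `x ^ s` and `y ^ t` both
generate `⟨x⟩ ∩ ⟨y⟩`, and writing one as a power of the other gives `c`, a unit modulo `Ω`.
If `x ^ a y ^ b = 1` then `x ^ a = y ^ (-b)` lies in `⟨x⟩ ∩ ⟨y⟩ = ⟨x ^ s⟩`, say `x ^ a = x ^ (k s)`,
and then `y ^ b = y ^ (-k c t)`: so `(a, b) = k • (s, -c t)` in `ℤ/h1 × ℤ/h2`.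
-/

open Subgroup

theorem Subgroup.zpowers_pow_orderOf_div_card {G : Type*} [Group G] {x : G} (hx : IsOfFinOrder x)
    {H : Subgroup G} (hH : H ≤ zpowers x) :
    zpowers (x ^ (orderOf x / Nat.card H)) = H := by
  have hn := hx.orderOf_pos.ne'
  have hdvd : Nat.card H ∣ orderOf x := by
    simpa [Nat.card_zpowers] using card_dvd_of_le hH
  have hd : Nat.card H ≠ 0 := fun h => hn (Nat.eq_zero_of_zero_dvd (h ▸ hdvd))
  have : Finite (zpowers (x ^ (orderOf x / Nat.card H))) := hx.pow.finite_zpowers.to_subtype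
  refine (eq_of_le_of_card_ge ?_ ?_).symm
  · intro h hh
    obtain ⟨k, rfl⟩ := mem_zpowers_iff.mp (hH hh)
    have hk : x ^ (k * Nat.card H) = 1 := by
      rw [zpow_mul, zpow_natCast, ← orderOf_dvd_iff_pow_eq_one]
      exact H.orderOf_dvd_natCard hh
    obtain ⟨j, hj⟩ : ((orderOf x / Nat.card H : ℕ) : ℤ) ∣ k := by
      refine Int.dvd_of_mul_dvd_mul_right (Int.natCast_ne_zero.mpr hd) ?_
      rw [← Nat.cast_mul, Nat.div_mul_cancel hdvd]
      exact orderOf_dvd_iff_zpow_eq_one.mpr hk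
    exact ⟨j, by rw [hj, zpow_mul, zpow_natCast]⟩
  · rw [Nat.card_zpowers, orderOf_pow_orderOf_div hn hdvd]

theorem exists_zpow_gcd_eq_one_of_zpowers_eq {G : Type*} [Group G] {a b : G}
    (h : zpowers a = zpowers b) : ∃ m : ℤ, m.gcd (orderOf b) = 1 ∧ a = b ^ m := by
  obtain ⟨m, rfl⟩ := mem_zpowers_iff.mp (h ▸ mem_zpowers a)
  exact ⟨m, mem_zpowers_zpow_iff.mp (h ▸ mem_zpowers b), rfl⟩

theorem zpow_eq_zpow_iff_intCast_eq {G : Type*} [Group G] {x : G} {a b : ℤ} :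
    x ^ a = x ^ b ↔ (a : ZMod (orderOf x)) = b := by
  rw [zpow_eq_zpow_iff_modEq, ZMod.intCast_eq_intCast_iff]

theorem ZMod.addOrderOf_prod_intCast {m n s t d : ℕ} (hm : s * d = m) (hn : t * d = n)
    (hm0 : m ≠ 0) (c : ℤ) : addOrderOf (((s : ℤ) : ZMod m), ((c * t : ℤ) : ZMod n)) = d := by
  have hs : s ≠ 0 := by rintro rfl; exact hm0 (by simp [← hm])
  have hfst : addOrderOf ((s : ℤ) : ZMod m) = d := by
    rw [Int.cast_natCast, ZMod.addOrderOf_coe s hm0, ← hm, Nat.gcd_eq_right (dvd_mul_right s d),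
      Nat.mul_div_cancel_left d (Nat.pos_of_ne_zero hs)]
  have hsnd : addOrderOf ((c * t : ℤ) : ZMod n) ∣ d := by
    refine addOrderOf_dvd_of_nsmul_eq_zero ?_
    rw [nsmul_eq_mul, ← Int.cast_natCast, ← Int.cast_mul, ZMod.intCast_zmod_eq_zero_iff_dvd]
    exact ⟨c, by rw [← hn]; push_cast; ring⟩
  rw [Prod.addOrderOf, hfst, Nat.lcm_eq_left hsnd]

theorem Multiplicative.exists_ofAdd_intCast_eq {m n : ℕ} (p : Multiplicative (ZMod m × ZMod n)) :
    ∃ a b : ℤ, Multiplicative.ofAdd ((a : ZMod m), (b : ZMod n)) = p := by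
  obtain ⟨a, ha⟩ := ZMod.intCast_surjective p.toAdd.1
  obtain ⟨b, hb⟩ := ZMod.intCast_surjective p.toAdd.2
  exact ⟨a, b, by rw [ha, hb]; rfl⟩

section

variable {A : Type*} [CommGroup A] {x y : A} {m n : ℕ}

def zmodProdZPowHom (hx : x ^ m = 1) (hy : y ^ n = 1) : Multiplicative (ZMod m × ZMod n) →* A :=
  AddMonoidHom.toMultiplicativeLeft
    ((ZMod.lift m ⟨zmultiplesHom _ (Additive.ofMul x), by simp [← ofMul_pow, hx]⟩).coprod
      (ZMod.lift n ⟨zmultiplesHom _ (Additive.ofMul y), by simp [← ofMul_pow, hy]⟩))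

theorem zmodProdZPowHom_ofAdd_intCast (hx : x ^ m = 1) (hy : y ^ n = 1) (a b : ℤ) :
    zmodProdZPowHom hx hy (Multiplicative.ofAdd ((a : ZMod m), (b : ZMod n))) = x ^ a * y ^ b := by
  simp [zmodProdZPowHom]

theorem range_zmodProdZPowHom (hx : x ^ m = 1) (hy : y ^ n = 1) :
    (zmodProdZPowHom hx hy).range = closure {x, y} := by
  have hxy : x ∈ closure {x, y} ∧ y ∈ closure {x, y} :=
    ⟨subset_closure (by simp), subset_closure (by simp)⟩
  refine le_antisymm ?_ (closure_le _ |>.mpr (Set.insert_subset_iff.mpr ⟨?_, ?_⟩))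
  · rintro _ ⟨p, rfl⟩
    obtain ⟨a, b, rfl⟩ := Multiplicative.exists_ofAdd_intCast_eq p
    rw [zmodProdZPowHom_ofAdd_intCast]
    exact mul_mem (zpow_mem hxy.1 a) (zpow_mem hxy.2 b)
  · exact ⟨Multiplicative.ofAdd (((1 : ℤ) : ZMod m), ((0 : ℤ) : ZMod n)), by
      simp only [zmodProdZPowHom_ofAdd_intCast, zpow_one, zpow_zero, mul_one]⟩
  · refine Set.singleton_subset_iff.mpr
      ⟨Multiplicative.ofAdd (((0 : ℤ) : ZMod m), ((1 : ℤ) : ZMod n)), ?_⟩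
    simp only [zmodProdZPowHom_ofAdd_intCast, zpow_one, zpow_zero, one_mul]

theorem ker_zmodProdZPowHom {s r : ℤ} (hs : zpowers x ⊓ zpowers y ≤ zpowers (x ^ s))
    (hsr : x ^ s = y ^ r) :
    (zmodProdZPowHom (pow_orderOf_eq_one x) (pow_orderOf_eq_one y)).ker =
      zpowers (Multiplicative.ofAdd ((s : ZMod (orderOf x)), ((-r : ℤ) : ZMod (orderOf y)))) := by
  refine le_antisymm (fun p hp => ?_) (zpowers_le.mpr ?_)
  · obtain ⟨a, b, rfl⟩ := Multiplicative.exists_ofAdd_intCast_eq p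
    rw [MonoidHom.mem_ker, zmodProdZPowHom_ofAdd_intCast, mul_eq_one_iff_eq_inv, ← zpow_neg] at hp
    obtain ⟨k, hk⟩ := mem_zpowers_iff.mp
      (hs ⟨zpow_mem (mem_zpowers x) a, hp ▸ zpow_mem (mem_zpowers y) (-b)⟩)
    have ha : x ^ (k * s) = x ^ a := by rw [mul_comm, zpow_mul, hk]
    have hb : y ^ (k * -r) = y ^ b := by
      rw [mul_neg, zpow_neg, mul_comm, zpow_mul, ← hsr, hk, hp, zpow_neg, inv_inv]
    refine ⟨k, ?_⟩
    beta_reduce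
    rw [← ofAdd_zsmul, Prod.smul_mk, zsmul_eq_mul, zsmul_eq_mul, ← Int.cast_mul, ← Int.cast_mul,
      zpow_eq_zpow_iff_intCast_eq.mp ha, zpow_eq_zpow_iff_intCast_eq.mp hb]
  · rw [MonoidHom.mem_ker, zmodProdZPowHom_ofAdd_intCast, hsr, zpow_neg, mul_inv_cancel]

end

/-- Let `x, y` be elements of an abelian group `A` of finite orders `h1` and `h2`, and let
`Ω = |⟨x⟩ ∩ ⟨y⟩|`, `s = h1/Ω`, `t = h2/Ω`. Then there exists an integer `c` coprime to `Ω`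
with `x^s = y^(c·t)`; and for any such `c` the homomorphism
`Φ : ℤ/h1ℤ × ℤ/h2ℤ → A`, `(a, b) ↦ x^a·y^b`, is well defined, has image `⟨x, y⟩`, and its
kernel is the cyclic subgroup generated by the class of `(s, −c·t)`, which has order `Ω`. -/
theorem crater_parametrization (A : Type*) [CommGroup A] (x y : A) (h1 h2 Ω s t : ℕ)
    (hx : orderOf x = h1) (hy : orderOf y = h2) (hx0 : 0 < h1) (hy0 : 0 < h2)
    (hΩ : Ω = Nat.card ↥(Subgroup.zpowers x ⊓ Subgroup.zpowers y))
    (hs : s = h1 / Ω) (ht : t = h2 / Ω) :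
    (∃ c : ℤ, Int.gcd c (Ω : ℤ) = 1 ∧ x ^ (s : ℤ) = y ^ (c * (t : ℤ))) ∧
    ∀ c : ℤ, Int.gcd c (Ω : ℤ) = 1 → x ^ (s : ℤ) = y ^ (c * (t : ℤ)) →
      ∃ Φ : Multiplicative (ZMod h1 × ZMod h2) →* A,
        (∀ a b : ℤ, Φ (Multiplicative.ofAdd ((a : ZMod h1), (b : ZMod h2))) =
          x ^ a * y ^ b) ∧
        Φ.range = Subgroup.closure ({x, y} : Set A) ∧
        Φ.ker = Subgroup.zpowers
          (Multiplicative.ofAdd (((s : ℤ) : ZMod h1), ((-(c * (t : ℤ)) : ℤ) : ZMod h2))) ∧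
        Nat.card ↥Φ.ker = Ω := by
  subst hx hy
  have hxs : zpowers (x ^ s) = zpowers x ⊓ zpowers y := by
    rw [hs, hΩ]
    exact zpowers_pow_orderOf_div_card (orderOf_pos_iff.mp hx0) inf_le_left
  have hyt : zpowers (y ^ t) = zpowers x ⊓ zpowers y := by
    rw [ht, hΩ]
    exact zpowers_pow_orderOf_div_card (orderOf_pos_iff.mp hy0) inf_le_right
  have hsΩ : s * Ω = orderOf x :=
    hs ▸ Nat.div_mul_cancel (Nat.card_zpowers x ▸ hΩ ▸ card_dvd_of_le inf_le_left)
  have htΩ : t * Ω = orderOf y :=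
    ht ▸ Nat.div_mul_cancel (Nat.card_zpowers y ▸ hΩ ▸ card_dvd_of_le inf_le_right)
  refine ⟨?_, fun c _ hxc => ?_⟩
  · obtain ⟨c, hc, hxc⟩ := exists_zpow_gcd_eq_one_of_zpowers_eq (hxs.trans hyt.symm)
    rw [← Nat.card_zpowers, hyt, ← hΩ] at hc
    exact ⟨c, hc, by rw [zpow_natCast, hxc, ← zpow_natCast, ← zpow_mul, mul_comm]⟩
  · have hker := ker_zmodProdZPowHom (hxs.symm.trans_le (by rw [zpow_natCast])) hxc
    refine ⟨_, zmodProdZPowHom_ofAdd_intCast _ _, range_zmodProdZPowHom _ _, hker, ?_⟩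
    rw [hker, Nat.card_zpowers, orderOf_ofAdd_eq_addOrderOf, ← neg_mul,
      ZMod.addOrderOf_prod_intCast hsΩ htΩ hx0.ne']
end
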